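/- Let f : ℝ² → ℝ² be a homeomorphism admitting a Lyapunov metric function U with the additional property that for every δ > 0 there exists a(δ) > 0 such that W(x,y) > a(δ) for all x,y ∈ ℝ² with U(x,y) > δ. If x, y ∈ ℝ² are distinct points such that U(fⁿ(x),fⁿ(y)) ≤ U(x,y) for all integers n ≥ 1, then V(fⁿ(x),fⁿ(y)) < 0 for all n ≥ 1 and U(fⁿ(x),fⁿ(y)) → 0 as n → +∞. -/

import Mathlib

/-- First difference of `U` along the dynamics of `f`:
`V(x,y) = U(f(x),f(y)) − U(x,y)`. -/
def Vd (f : Equiv.Perm (ℝ × ℝ)) (U : ℝ × ℝ → ℝ × ℝ → ℝ) (x y : ℝ × ℝ) : ℝ :=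
  U (f x) (f y) - U x y

/-- Second difference of `U` along the dynamics of `f`:
`W(x,y) = U(f²(x),f²(y)) − 2·U(f(x),f(y)) + U(x,y)`. -/
def Wd (f : Equiv.Perm (ℝ × ℝ)) (U : ℝ × ℝ → ℝ × ℝ → ℝ) (x y : ℝ × ℝ) : ℝ :=
  U (f (f x)) (f (f y)) - 2 * U (f x) (f y) + U x y

/-- `U` is a Lyapunov metric function for `f`: a continuous metric on the plane
inducing the same topology as the Euclidean one, whose second difference along
`f` is strictly positive off the diagonal. -/
def IsLyapunovMetric (f : Equiv.Perm (ℝ × ℝ)) (U : ℝ × ℝ → ℝ × ℝ → ℝ) : Prop :=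
  Continuous (fun z : (ℝ × ℝ) × (ℝ × ℝ) => U z.1 z.2) ∧
  (∀ x y, 0 ≤ U x y) ∧ (∀ x y, U x y = U y x) ∧
  (∀ x y, U x y = 0 ↔ x = y) ∧
  (∀ x y z, U x z ≤ U x y + U y z) ∧
  (∀ x : ℝ × ℝ, ∀ ε > (0:ℝ), ∃ δ > (0:ℝ), ∀ y, dist x y < δ → U x y < ε) ∧
  (∀ x : ℝ × ℝ, ∀ ε > (0:ℝ), ∃ δ > (0:ℝ), ∀ y, U x y < δ → dist x y < ε) ∧
  (∀ x y : ℝ × ℝ, x ≠ y → 0 < Wd f U x y)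

/-- `B_k(x)`: the connected component containing `x` of `{w : U(x,w) ≤ k}`. -/
def Bk (U : ℝ × ℝ → ℝ × ℝ → ℝ) (k : ℝ) (x : ℝ × ℝ) : Set (ℝ × ℝ) :=
  connectedComponentIn {w : ℝ × ℝ | U x w ≤ k} x

/-- The both-signs condition: on the boundary of every `B_k(x)` the first
difference takes both a positive and a negative value. -/
def BothSigns (f : Equiv.Perm (ℝ × ℝ)) (U : ℝ × ℝ → ℝ × ℝ → ℝ) : Prop :=
  ∀ x : ℝ × ℝ, ∀ k > (0:ℝ),
    (∃ y ∈ frontier (Bk U k x), 0 < Vd f U x y) ∧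
    (∃ z ∈ frontier (Bk U k x), Vd f U x z < 0)

/-!
Along the orbit, `u n = U(fⁿx, fⁿy)` is a sequence whose first and second forward differences
are `V` and `W`. Since `W > 0`, the differences of `u` are strictly increasing; once one of them
were `≥ 0` the next would be positive and `u` would grow at least linearly, contradicting
`u n ≤ u 0`. So `u` decreases. If it stayed above some `ε > 0`, the uniform bound `W > a(ε)`
would make the differences grow linearly as well, so they could not stay negative.
-/

open Filter Topology fwdDiff

lemma le_add_mul_of_le_fwdDiff {g : ℤ → ℝ} {c : ℝ} {N : ℤ} (h : ∀ m ≥ N, c ≤ Δ_[1] g m)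
    {m : ℤ} (hm : N ≤ m) : g N + (m - N) * c ≤ g m := by
  induction m, hm using Int.leInduction with
  | base => simp
  | succ m hm ih =>
    have hstep := h m hm
    simp only [fwdDiff] at hstep
    push_cast
    linarith

lemma tendsto_atTop_of_le_fwdDiff {g : ℤ → ℝ} {c : ℝ} (hc : 0 < c) {N : ℤ}
    (h : ∀ m ≥ N, c ≤ Δ_[1] g m) : Tendsto g atTop atTop := by
  refine tendsto_atTop_mono' atTop
    ((eventually_ge_atTop N).mono fun m hm => le_add_mul_of_le_fwdDiff h hm) ?_
  refine tendsto_atTop_add_const_left _ _ (Tendsto.atTop_mul_const hc ?_)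
  exact tendsto_atTop_add_const_right _ _ tendsto_intCast_atTop_atTop

lemma fwdDiff_neg_of_strictMono_fwdDiff {u : ℤ → ℝ} (hconv : StrictMono (Δ_[1] u))
    (hle : ∀ n ≥ 1, u n ≤ u 0) (n : ℤ) : Δ_[1] u n < 0 := by
  by_contra! hnonneg
  have hpos : 0 < Δ_[1] u (n + 1) := hnonneg.trans_lt (hconv (lt_add_one n))
  have hgrow := tendsto_atTop_of_le_fwdDiff hpos fun m hm => hconv.monotone hm
  obtain ⟨m, hm, hbig⟩ := ((eventually_ge_atTop 1).and (hgrow.eventually_gt_atTop (u 0))).exists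
  exact (hle m hm).not_gt hbig

lemma antitoneOn_of_fwdDiff_nonpos {u : ℤ → ℝ} {N : ℤ} (h : ∀ n ≥ N, Δ_[1] u n ≤ 0) :
    AntitoneOn u (Set.Ici N) := by
  rintro n (hn : N ≤ n) m - hnm
  induction m, hnm using Int.leInduction with
  | base => rfl
  | succ m hm ih =>
    have hstep := h m (le_trans hn hm)
    simp only [fwdDiff] at hstep
    linarith

lemma tendsto_zero_of_fwdDiff_neg {u : ℤ → ℝ} (hnonneg : ∀ n, 0 ≤ u n)
    (hdec : ∀ n ≥ 1, Δ_[1] u n < 0)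
    (hunif : ∀ δ > 0, ∃ a > 0, ∀ n ≥ 1, δ < u n → a ≤ Δ_[1] (Δ_[1] u) n) :
    Tendsto u atTop (𝓝 0) := by
  have hsmall : ∀ ε > 0, ∃ n ≥ 1, u n ≤ ε := by
    intro ε hε
    by_contra! hlarge
    obtain ⟨a, ha, hWa⟩ := hunif ε hε
    have hgrow := tendsto_atTop_of_le_fwdDiff ha fun n hn => hWa n hn (hlarge n hn)
    obtain ⟨n, hn, hpos⟩ := ((eventually_ge_atTop 1).and (hgrow.eventually_gt_atTop 0)).exists
    exact (hdec n hn).not_gt hpos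
  rw [Metric.tendsto_atTop]
  intro ε hε
  obtain ⟨n, hn, hun⟩ := hsmall (ε / 2) (half_pos hε)
  refine ⟨n, fun m hm => ?_⟩
  have hum := antitoneOn_of_fwdDiff_nonpos (fun k hk => (hdec k hk).le) hn (le_trans hn hm) hm
  rw [Real.dist_eq, sub_zero, abs_of_nonneg (hnonneg m)]
  linarith

def orbitDist (f : Equiv.Perm (ℝ × ℝ)) (U : ℝ × ℝ → ℝ × ℝ → ℝ) (x y : ℝ × ℝ) (n : ℤ) : ℝ :=
  U ((f ^ n) x) ((f ^ n) y)

lemma Equiv.Perm.zpow_add_one_apply {α : Type*} (f : Equiv.Perm α) (n : ℤ) (z : α) :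
    (f ^ (n + 1)) z = f ((f ^ n) z) := by
  rw [add_comm, zpow_one_add, Equiv.Perm.mul_apply]

lemma fwdDiff_orbitDist (f : Equiv.Perm (ℝ × ℝ)) (U : ℝ × ℝ → ℝ × ℝ → ℝ) (x y : ℝ × ℝ)
    (n : ℤ) : Δ_[1] (orbitDist f U x y) n = Vd f U ((f ^ n) x) ((f ^ n) y) := by
  simp only [fwdDiff, orbitDist, Vd, Equiv.Perm.zpow_add_one_apply]

lemma fwdDiff_fwdDiff_orbitDist (f : Equiv.Perm (ℝ × ℝ)) (U : ℝ × ℝ → ℝ × ℝ → ℝ)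
    (x y : ℝ × ℝ) (n : ℤ) :
    Δ_[1] (Δ_[1] (orbitDist f U x y)) n = Wd f U ((f ^ n) x) ((f ^ n) y) := by
  simp only [fwdDiff, orbitDist, Wd, Equiv.Perm.zpow_add_one_apply]
  ring

theorem forward_contraction_tends_to_zero_general
    (f : Equiv.Perm (ℝ × ℝ)) (U : ℝ × ℝ → ℝ × ℝ → ℝ) (hU : IsLyapunovMetric f U)
    (hWbelow : ∀ δ > (0:ℝ), ∃ a > (0:ℝ), ∀ x y : ℝ × ℝ, δ < U x y → a < Wd f U x y)
    (x y : ℝ × ℝ) (hxy : x ≠ y)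
    (hdecr : ∀ n : ℤ, 1 ≤ n → U ((f ^ n) x) ((f ^ n) y) ≤ U x y) :
    (∀ n : ℤ, 1 ≤ n → Vd f U ((f ^ n) x) ((f ^ n) y) < 0) ∧
    Filter.Tendsto (fun n : ℤ => U ((f ^ n) x) ((f ^ n) y))
      Filter.atTop (nhds 0) := by
  obtain ⟨-, hnonneg, -, -, -, -, -, hW⟩ := hU
  set u := orbitDist f U x y
  have hconv : StrictMono (Δ_[1] u) := strictMono_int_of_lt_succ fun n => by
    have hne : (f ^ n) x ≠ (f ^ n) y := fun h => hxy ((f ^ n).injective h)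
    have hWn := hW _ _ hne
    rw [← fwdDiff_fwdDiff_orbitDist] at hWn
    exact sub_pos.mp hWn
  have hV : ∀ n, Δ_[1] u n < 0 :=
    fwdDiff_neg_of_strictMono_fwdDiff hconv fun m hm => by simpa [u, orbitDist] using hdecr m hm
  refine ⟨fun n _ => fwdDiff_orbitDist f U x y n ▸ hV n,
    tendsto_zero_of_fwdDiff_neg (fun n => hnonneg _ _) (fun n _ => hV n) fun δ hδ => ?_⟩
  obtain ⟨a, ha, hWa⟩ := hWbelow δ hδ
  exact ⟨a, ha, fun n _ hn => (fwdDiff_fwdDiff_orbitDist f U x y n ▸ hWa _ _ hn).le⟩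

/-- if `W` is uniformly bounded below away from the diagonal and
the forward `U`-distances never exceed the initial one, then the first
differences are negative along the forward orbit and `U(fⁿ(x),fⁿ(y)) → 0`. -/
theorem forward_contraction_tends_to_zero
    (f : Equiv.Perm (ℝ × ℝ)) (hf : Continuous f) (hf' : Continuous f.symm)
    (U : ℝ × ℝ → ℝ × ℝ → ℝ) (hU : IsLyapunovMetric f U)
    (hWbelow : ∀ δ > (0:ℝ), ∃ a > (0:ℝ), ∀ x y : ℝ × ℝ, δ < U x y → a < Wd f U x y)
    (x y : ℝ × ℝ) (hxy : x ≠ y)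
    (hdecr : ∀ n : ℤ, 1 ≤ n → U ((f ^ n) x) ((f ^ n) y) ≤ U x y) :
    (∀ n : ℤ, 1 ≤ n → Vd f U ((f ^ n) x) ((f ^ n) y) < 0) ∧
    Filter.Tendsto (fun n : ℤ => U ((f ^ n) x) ((f ^ n) y))
      Filter.atTop (nhds 0) :=
  forward_contraction_tends_to_zero_general f U hU hWbelow x y hxy hdecr
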